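/- arXiv:0805.0902 — 2 statements merged into one kernel-verified Lean document; each statement's English description precedes it below -/
import Mathlib

section
/- Let ε ≥ 0 and n ∈ (1,∞). If a metric measure space (X,d,μ) satisfies ε-BM(n−1,n), then for every r > 0 its concentration function satisfies α_{(X,d,μ)}(r) ≤ 2·exp(−(n−1)·r²/π²). -/
open MeasureTheory ENNReal

/-- The set of `ε`-approximated `t`-intermediate points between `A₀` and `A₁`. -/
def interSet {X : Type*} [PseudoMetricSpace X] (ε t : ℝ) (A₀ A₁ : Set X) : Set X :=
  {x | ∃ x₀ ∈ A₀, ∃ x₁ ∈ A₁,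
    |dist x₀ x - t * dist x₀ x₁| ≤ ε ∧ |dist x x₁ - (1 - t) * dist x₀ x₁| ≤ ε}

/-- The sine distortion coefficient `(sin(t·d)/(t·sin d))^{(n-1)/n}`, set to `+∞` when `d ≥ π`. -/
noncomputable def distCoef (n t d : ℝ) : ℝ≥0∞ :=
  if d < Real.pi then
    ENNReal.ofReal ((Real.sin (t * d) / (t * Real.sin d)) ^ ((n - 1) / n))
  else ⊤

/-- The `ε`-approximated Brunn–Minkowski inequality `ε-BM(n-1, n)`. -/
def BMCond {X : Type*} [PseudoMetricSpace X] [MeasurableSpace X]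
    (μ : Measure X) (ε n : ℝ) : Prop :=
  ∀ A₀ A₁ : Set X, MeasurableSet A₀ → MeasurableSet A₁ → A₀.Nonempty → A₁.Nonempty →
    ∀ t ∈ Set.Ioo (0 : ℝ) 1,
      ENNReal.ofReal (1 - t) * (⨅ x₀ ∈ A₀, ⨅ x₁ ∈ A₁, distCoef n (1 - t) (dist x₀ x₁)) *
          μ A₀ ^ (1 / n)
        + ENNReal.ofReal t * (⨅ x₀ ∈ A₀, ⨅ x₁ ∈ A₁, distCoef n t (dist x₀ x₁)) *
          μ A₁ ^ (1 / n)
      ≤ μ (interSet ε t A₀ A₁) ^ (1 / n)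

/-- The concentration function `α(r) = sup {1 - μ(A_r) : μ(A) ≥ 1/2}`. -/
noncomputable def concFn {X : Type*} [PseudoMetricSpace X] [MeasurableSpace X]
    (μ : Measure X) (r : ℝ) : ℝ :=
  sSup {v : ℝ | ∃ A : Set X, MeasurableSet A ∧ 1 / 2 ≤ μ A ∧
    v = 1 - (μ (Metric.thickening r A)).toReal}

/-!
Apply `ε-BM(n-1, n)` at `t = 1/2` to a set `A` with `μ A ≥ 1/2` and to the complement `B` of its
`r`-neighbourhood. Points of `A` and `B` are at distance `≥ r`, and at `t = 1/2` the distortion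
coefficient of a pair at distance `d` is `cos (d/2) ^ (-(n-1)/n)`, which is `+∞` for `d ≥ π`
(so `B = ∅` when `r ≥ π`) and otherwise at least `cos (r/2) ^ (-(n-1)/n)`. As the intermediate
set has measure at most `1`, this gives `μ A ^ (1/n) + μ B ^ (1/n) ≤ 2 cos (r/2) ^ ((n-1)/n)`.
Then `cos (r/2) ≤ exp (-r²/π²)` (from `cos x ≤ exp (-x²/2)`), `μ A ≥ 1/2` and
`2 ^ (1/n) + 2 ^ (-1/n) ≥ 2` give `μ B ≤ 2 exp (-(n-1) r²/π²)`.
-/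

section

open Real

theorem Real.cos_le_exp_neg_sq_div_two {x : ℝ} (hx₀ : 0 ≤ x) (hx : x ≤ π / 2) :
    cos x ≤ exp (-(x ^ 2 / 2)) := by
  -- `y ↦ exp (y²/2) cos y` is antitone on `[0, π/2]` because `y ≤ tan y` there.
  set f : ℝ → ℝ := fun y => exp (y ^ 2 / 2) * cos y
  have hf : ∀ y, HasDerivAt f (exp (y ^ 2 / 2) * (y * cos y - sin y)) y := fun y => by
    refine ((((hasDerivAt_pow 2 y).div_const 2).exp).mul (hasDerivAt_cos y)).congr_deriv ?_
    norm_num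
    ring
  have hanti : AntitoneOn f (Set.Icc 0 (π / 2)) := by
    refine antitoneOn_of_deriv_nonpos (convex_Icc _ _) (by fun_prop)
      (fun y _ => (hf y).differentiableAt.differentiableWithinAt) fun y hy => ?_
    rw [interior_Icc] at hy
    have hcos : 0 < cos y := cos_pos_of_mem_Ioo ⟨by linarith [pi_pos, hy.1], hy.2⟩
    have htan := le_tan hy.1.le hy.2
    rw [tan_eq_sin_div_cos, le_div_iff₀ hcos] at htan
    rw [(hf y).deriv]
    exact mul_nonpos_of_nonneg_of_nonpos (exp_pos _).le (by linarith)
  have hfx : f x ≤ 1 := by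
    simpa [f] using hanti ⟨le_rfl, by positivity⟩ ⟨hx₀, hx⟩ hx₀
  calc cos x = exp (-(x ^ 2 / 2)) * f x := by simp [f, ← mul_assoc, ← exp_add]
    _ ≤ exp (-(x ^ 2 / 2)) := mul_le_of_le_one_right (exp_pos _).le hfx

theorem Real.cos_half_le_exp_neg_sq_div_pi_sq {r : ℝ} (hr₀ : 0 ≤ r) (hr : r ≤ π) :
    cos (r / 2) ≤ exp (-(r ^ 2 / π ^ 2)) := by
  have hπ : 8 ≤ π ^ 2 := by nlinarith [pi_gt_three]
  calc cos (r / 2) ≤ exp (-((r / 2) ^ 2 / 2)) := cos_le_exp_neg_sq_div_two (by linarith) (by linarith)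
    _ = exp (-(r ^ 2 / 8)) := by ring_nf
    _ ≤ exp (-(r ^ 2 / π ^ 2)) := by
      gcongr exp (-?_)
      exact div_le_div_of_nonneg_left (sq_nonneg r) (by norm_num) hπ

lemma distCoef_half_eq {n d : ℝ} (hd₀ : 0 < d) (hd : d < π) :
    distCoef n (1 / 2) d = ENNReal.ofReal ((cos (d / 2) ^ ((n - 1) / n))⁻¹) := by
  have hsin : 0 < sin (d / 2) := sin_pos_of_pos_of_lt_pi (by linarith) (by linarith)
  have hcos : 0 < cos (d / 2) := cos_pos_of_mem_Ioo ⟨by linarith, by linarith⟩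
  have hratio : sin (1 / 2 * d) / (1 / 2 * sin d) = (cos (d / 2))⁻¹ := by
    rw [show d = 2 * (d / 2) by ring, sin_two_mul]
    field_simp
  rw [distCoef, if_pos hd, hratio, inv_rpow hcos.le]

lemma distCoef_eq_top {n t d : ℝ} (hd : π ≤ d) : distCoef n t d = ⊤ :=
  if_neg hd.not_gt

lemma ofReal_le_distCoef_half {n r d : ℝ} (hn : 1 ≤ n) (hr₀ : 0 < r) (hr : r < π)
    (hrd : r ≤ d) :
    ENNReal.ofReal ((cos (r / 2) ^ ((n - 1) / n))⁻¹) ≤ distCoef n (1 / 2) d := by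
  rcases lt_or_ge d π with hd | hd
  · rw [distCoef_half_eq (hr₀.trans_le hrd) hd]
    have hcos : 0 < cos (d / 2) := cos_pos_of_mem_Ioo ⟨by linarith, by linarith⟩
    gcongr
    exact cos_le_cos_of_nonneg_of_le_pi (by linarith) (by linarith) (by linarith)
  · rw [distCoef_eq_top hd]
    exact le_top

lemma le_two_mul_rpow_of_rpow_add_rpow_le {n a b q : ℝ} (hn : 1 ≤ n) (ha : 1 / 2 ≤ a)
    (hb : 0 ≤ b) (hq₀ : 0 < q) (hq₁ : q ≤ 1)
    (h : a ^ (1 / n) + b ^ (1 / n) ≤ 2 * q ^ ((n - 1) / n)) :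
    b ≤ 2 * q ^ (n - 1) := by
  have hn₀ : 0 < n := by linarith
  set p : ℝ := 2 ^ (1 / n)
  have hp : 0 < p := by positivity
  have hqm₀ : 0 < q ^ ((n - 1) / n) := rpow_pos_of_pos hq₀ _
  have hqm₁ : q ^ ((n - 1) / n) ≤ 1 := rpow_le_one hq₀.le hq₁ (div_nonneg (by linarith) hn₀.le)
  have ha' : p⁻¹ ≤ a ^ (1 / n) := by
    rw [← inv_rpow zero_le_two]
    exact rpow_le_rpow (by norm_num) (by linarith) (by positivity)
  have hp_inv : 2 - p ≤ p⁻¹ := by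
    have := mul_inv_cancel₀ hp.ne'
    nlinarith [sq_nonneg (p - 1)]
  have hp₂ : p ≤ 2 := by
    have := Real.rpow_le_rpow_of_exponent_le one_le_two ((div_le_one hn₀).2 hn)
    rwa [Real.rpow_one] at this
  have hbs : b ^ (1 / n) ≤ p * q ^ ((n - 1) / n) := by
    nlinarith [mul_le_mul_of_nonneg_left hqm₁ (sub_nonneg.2 hp₂)]
  calc b = (b ^ (1 / n)) ^ n := by rw [← rpow_mul hb, one_div_mul_cancel hn₀.ne', Real.rpow_one]
    _ ≤ (p * q ^ ((n - 1) / n)) ^ n := by gcongr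
    _ = 2 * q ^ (n - 1) := by
      rw [mul_rpow hp.le hqm₀.le, ← rpow_mul zero_le_two, ← rpow_mul hq₀.le,
        one_div_mul_cancel hn₀.ne', Real.rpow_one, div_mul_cancel₀ _ hn₀.ne']

lemma le_two_mul_exp_of_half_mul_add_rpow_le_one {n r a b : ℝ} (hn : 1 ≤ n) (hr₀ : 0 ≤ r)
    (hr : r < π) (ha : 1 / 2 ≤ a) (hb : 0 ≤ b)
    (h : 1 / 2 * (cos (r / 2) ^ ((n - 1) / n))⁻¹ * (a ^ (1 / n) + b ^ (1 / n)) ≤ 1) :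
    b ≤ 2 * exp (-(n - 1) * r ^ 2 / π ^ 2) := by
  set c := cos (r / 2) ^ ((n - 1) / n)
  have hc : 0 < c := rpow_pos_of_pos (cos_pos_of_mem_Ioo ⟨by linarith, by linarith⟩) _
  have hsum : a ^ (1 / n) + b ^ (1 / n) ≤ 2 * exp (-(r ^ 2 / π ^ 2)) ^ ((n - 1) / n) :=
    calc a ^ (1 / n) + b ^ (1 / n) = 2 * c * (1 / 2 * c⁻¹ * (a ^ (1 / n) + b ^ (1 / n))) := by
          field_simp
      _ ≤ 2 * c := mul_le_of_le_one_right (by positivity) h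
      _ ≤ 2 * exp (-(r ^ 2 / π ^ 2)) ^ ((n - 1) / n) := by
        gcongr 2 * ?_
        exact Real.rpow_le_rpow (cos_nonneg_of_mem_Icc ⟨by linarith, by linarith⟩)
          (cos_half_le_exp_neg_sq_div_pi_sq hr₀ hr.le) (div_nonneg (by linarith) (by linarith))
  have := le_two_mul_rpow_of_rpow_add_rpow_le hn ha hb (exp_pos _)
    (exp_le_one_iff.2 (neg_nonpos.2 (by positivity))) hsum
  rwa [← exp_mul, show -(r ^ 2 / π ^ 2) * (n - 1) = -(n - 1) * r ^ 2 / π ^ 2 by ring] at this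

variable {X : Type*} [PseudoMetricSpace X] [MeasurableSpace X] {μ : Measure X} {ε n : ℝ}

lemma BMCond.half_mul_add_rpow_le_one [IsProbabilityMeasure μ] (hBM : BMCond μ ε n)
    (hn : 0 ≤ n) {A B : Set X} (hA : MeasurableSet A) (hB : MeasurableSet B)
    (hA₀ : A.Nonempty) (hB₀ : B.Nonempty) {κ : ℝ≥0∞}
    (hκ : ∀ x₀ ∈ A, ∀ x₁ ∈ B, κ ≤ distCoef n (1 / 2) (dist x₀ x₁)) :
    ENNReal.ofReal (1 / 2) * κ * (μ A ^ (1 / n) + μ B ^ (1 / n)) ≤ 1 := by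
  have hinf : κ ≤ ⨅ x₀ ∈ A, ⨅ x₁ ∈ B, distCoef n (1 / 2) (dist x₀ x₁) :=
    le_iInf₂ fun x₀ hx₀ => le_iInf₂ (hκ x₀ hx₀)
  have hBM' := hBM A B hA hB hA₀ hB₀ (1 / 2) ⟨by norm_num, by norm_num⟩
  rw [show (1 : ℝ) - 1 / 2 = 1 / 2 by norm_num] at hBM'
  calc ENNReal.ofReal (1 / 2) * κ * (μ A ^ (1 / n) + μ B ^ (1 / n))
      = ENNReal.ofReal (1 / 2) * κ * μ A ^ (1 / n) + ENNReal.ofReal (1 / 2) * κ * μ B ^ (1 / n) :=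
        mul_add _ _ _
    _ ≤ μ (interSet ε (1 / 2) A B) ^ (1 / n) := le_trans (by gcongr) hBM'
    _ ≤ 1 := ENNReal.rpow_le_one prob_le_one (by positivity)

lemma BMCond.measureReal_le_of_le_dist [IsProbabilityMeasure μ] (hBM : BMCond μ ε n)
    (hn : 1 < n) {A B : Set X} (hA : MeasurableSet A) (hB : MeasurableSet B) (hAμ : 1 / 2 ≤ μ A)
    {r : ℝ} (hr : 0 < r) (hAB : ∀ x₀ ∈ A, ∀ x₁ ∈ B, r ≤ dist x₀ x₁) :
    μ.real B ≤ 2 * exp (-(n - 1) * r ^ 2 / π ^ 2) := by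
  rcases B.eq_empty_or_nonempty with rfl | hB₀
  · simp only [measureReal_empty]
    positivity
  have hμA : 0 < μ A := lt_of_lt_of_le (by norm_num) hAμ
  have hA₀ : A.Nonempty := nonempty_of_measure_ne_zero hμA.ne'
  rcases lt_or_ge r π with hrπ | hrπ
  · have h := hBM.half_mul_add_rpow_le_one (by linarith) hA hB hA₀ hB₀
      fun x₀ hx₀ x₁ hx₁ => ofReal_le_distCoef_half hn.le hr hrπ (hAB x₀ hx₀ x₁ hx₁)
    have hc : 0 < cos (r / 2) ^ ((n - 1) / n) :=
      rpow_pos_of_pos (cos_pos_of_mem_Ioo ⟨by linarith, by linarith⟩) _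
    have hreal := ENNReal.toReal_mono one_ne_top h
    rw [ENNReal.toReal_mul, ENNReal.toReal_mul, ENNReal.toReal_add (by finiteness) (by finiteness),
      ← ENNReal.toReal_rpow, ← ENNReal.toReal_rpow, ENNReal.toReal_ofReal (by norm_num),
      ENNReal.toReal_ofReal (inv_pos.2 hc).le] at hreal
    refine le_two_mul_exp_of_half_mul_add_rpow_le_one hn.le hr.le hrπ ?_ measureReal_nonneg hreal
    simpa [measureReal_def] using ENNReal.toReal_mono (measure_ne_top μ A) hAμ
  · have h := hBM.half_mul_add_rpow_le_one (by linarith) hA hB hA₀ hB₀ (κ := ⊤)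
      fun x₀ hx₀ x₁ hx₁ => (distCoef_eq_top (hrπ.trans (hAB x₀ hx₀ x₁ hx₁))).ge
    have hpos : 0 < μ A ^ (1 / n) + μ B ^ (1 / n) :=
      (ENNReal.rpow_pos hμA (measure_ne_top μ A)).trans_le le_self_add
    rw [ENNReal.mul_top (by norm_num), ENNReal.top_mul hpos.ne'] at h
    exact absurd h (by simp)

end

theorem main_concentration_general (X : Type*) [MetricSpace X] [MeasurableSpace X] [BorelSpace X]
    (μ : Measure X) [IsProbabilityMeasure μ]
    (ε n : ℝ) (hn : 1 < n) (hBM : BMCond μ ε n) :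
    ∀ r : ℝ, 0 < r →
      concFn μ r ≤ 2 * Real.exp (-(n - 1) * r ^ 2 / Real.pi ^ 2) := by
  intro r hr
  refine Real.sSup_le ?_ (by positivity)
  rintro v ⟨A, hA, hAμ, rfl⟩
  have hT : MeasurableSet (Metric.thickening r A) := Metric.isOpen_thickening.measurableSet
  rw [← measureReal_def, ← probReal_compl_eq_one_sub hT]
  refine hBM.measureReal_le_of_le_dist hn hA hT.compl hAμ hr fun x₀ hx₀ x₁ hx₁ => ?_
  exact not_lt.1 fun h => hx₁ (Metric.mem_thickening_iff.2 ⟨x₀, hx₀, by rwa [dist_comm]⟩)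

theorem main_concentration (X : Type*) [MetricSpace X] [CompleteSpace X]
    [TopologicalSpace.SeparableSpace X] [MeasurableSpace X] [BorelSpace X]
    (μ : Measure X) [IsProbabilityMeasure μ] [μ.IsOpenPosMeasure]
    (ε n : ℝ) (hε : 0 ≤ ε) (hn : 1 < n) (hBM : BMCond μ ε n) :
    ∀ r : ℝ, 0 < r →
      concFn μ r ≤ 2 * Real.exp (-(n - 1) * r ^ 2 / Real.pi ^ 2) :=
  main_concentration_general X μ ε n hn hBM
end

section
/- Let (X,d,μ) satisfy ε-BM(n−1,n) with ε ≥ 0 and n ∈ (1,∞). Then for every r ∈ (0, π), α_{(X,d,μ)}(r) ≤ exp(−n·[1 + 2^{−1/n} − 2·(cos(r/2))^{(n−1)/n}]). -/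
/-!
Apply `ε-BM(n-1, n)` at `t = 1/2` to a set `A` with `μ A ≥ 1/2` and to `B = (A_r)ᶜ`. Points of
`A` and `B` are at distance at least `r`, and `sin (d/2) / ((1/2) sin d) = 1 / cos (d/2)` is
increasing in `d`, so the distortion coefficients are at least `cos (r/2)^{-(n-1)/n}`. Since the
intermediate set has measure at most `1`, this gives
`μ(B)^{1/n} ≤ 2 cos (r/2)^{(n-1)/n} - 2^{-1/n}`, and `log x ≤ x - 1` applied to `x = μ(B)^{1/n}`
turns this into the exponential bound.
-/

open MeasureTheory ENNReal

lemma Real.sin_half_mul_div_half_mul_sin {d : ℝ} (hd : Real.sin (d / 2) ≠ 0) :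
    Real.sin (1 / 2 * d) / (1 / 2 * Real.sin d) = (Real.cos (d / 2))⁻¹ := by
  have hsin : Real.sin d = 2 * Real.sin (d / 2) * Real.cos (d / 2) := by
    rw [← Real.sin_two_mul, mul_div_cancel₀ _ two_ne_zero]
  rw [hsin, show 1 / 2 * d = d / 2 by ring]
  field_simp

lemma ofReal_inv_cos_half_rpow_le_distCoef_half {n r d : ℝ} (hn : 1 ≤ n) (hr : 0 < r)
    (hrd : r ≤ d) :
    ENNReal.ofReal ((Real.cos (r / 2))⁻¹ ^ ((n - 1) / n)) ≤ distCoef n (1 / 2) d := by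
  unfold distCoef
  split_ifs with hdπ
  · have hπ := Real.pi_pos
    have hcos : 0 < Real.cos (d / 2) := Real.cos_pos_of_mem_Ioo ⟨by linarith, by linarith⟩
    have hsin : Real.sin (d / 2) ≠ 0 :=
      (Real.sin_pos_of_pos_of_lt_pi (by linarith) (by linarith)).ne'
    rw [Real.sin_half_mul_div_half_mul_sin hsin]
    have hcos_le : Real.cos (d / 2) ≤ Real.cos (r / 2) :=
      Real.cos_le_cos_of_nonneg_of_le_pi (by linarith) (by linarith) (by linarith)
    exact ENNReal.ofReal_le_ofReal <| Real.rpow_le_rpow (inv_nonneg.2 (hcos.le.trans hcos_le))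
      (inv_anti₀ hcos hcos_le) (div_nonneg (by linarith) (by linarith))
  · exact le_top

lemma le_dist_of_mem_compl_thickening {X : Type*} [PseudoMetricSpace X] {r : ℝ} {A : Set X}
    {x₀ x₁ : X} (h₀ : x₀ ∈ A) (h₁ : x₁ ∈ (Metric.thickening r A)ᶜ) : r ≤ dist x₀ x₁ := by
  by_contra! h
  exact h₁ (Metric.mem_thickening_iff.2 ⟨x₀, h₀, by rwa [dist_comm]⟩)

lemma BMCond.half_mul_add_rpow_le_one_s9 {X : Type*} [PseudoMetricSpace X] [MeasurableSpace X]
    {μ : Measure X} [IsProbabilityMeasure μ] {ε n : ℝ} (hBM : BMCond μ ε n) (hn : 0 ≤ n)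
    {A₀ A₁ : Set X} (h₀ : MeasurableSet A₀) (h₁ : MeasurableSet A₁) (hA₀ : A₀.Nonempty)
    (hA₁ : A₁.Nonempty) {K : ℝ} (hK0 : 0 ≤ K) (hK : ∀ x₀ ∈ A₀, ∀ x₁ ∈ A₁,
      ENNReal.ofReal K ≤ distCoef n (1 / 2) (dist x₀ x₁)) :
    1 / 2 * K * ((μ A₀).toReal ^ (1 / n) + (μ A₁).toReal ^ (1 / n)) ≤ 1 := by
  have hK' : ENNReal.ofReal K ≤ ⨅ x₀ ∈ A₀, ⨅ x₁ ∈ A₁, distCoef n (1 / 2) (dist x₀ x₁) :=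
    le_iInf₂ fun x₀ h₀ => le_iInf₂ fun x₁ h₁ => hK x₀ h₀ x₁ h₁
  have hBM' := hBM A₀ A₁ h₀ h₁ hA₀ hA₁ (1 / 2) ⟨by norm_num, by norm_num⟩
  rw [show (1 : ℝ) - 1 / 2 = 1 / 2 by norm_num] at hBM'
  have key : ENNReal.ofReal (1 / 2) * ENNReal.ofReal K * (μ A₀ ^ (1 / n) + μ A₁ ^ (1 / n)) ≤ 1 :=
    calc _ = ENNReal.ofReal (1 / 2) * ENNReal.ofReal K * μ A₀ ^ (1 / n)
          + ENNReal.ofReal (1 / 2) * ENNReal.ofReal K * μ A₁ ^ (1 / n) := mul_add _ _ _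
      _ ≤ _ := by gcongr
      _ ≤ μ (interSet ε (1 / 2) A₀ A₁) ^ (1 / n) := hBM'
      _ ≤ 1 := ENNReal.rpow_le_one prob_le_one (by positivity)
  have hfin : ∀ A, μ A ^ (1 / n) ≠ ⊤ := fun A =>
    ENNReal.rpow_ne_top_of_nonneg (by positivity) (measure_ne_top μ A)
  have := ENNReal.toReal_mono one_ne_top key
  rwa [ENNReal.toReal_mul, ENNReal.toReal_mul, ENNReal.toReal_add (hfin A₀) (hfin A₁),
    ENNReal.toReal_ofReal (by norm_num), ENNReal.toReal_ofReal hK0, ← ENNReal.toReal_rpow,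
    ← ENNReal.toReal_rpow, ENNReal.toReal_one] at this

lemma BMCond.rpow_measure_compl_thickening_le {X : Type*} [PseudoMetricSpace X]
    [MeasurableSpace X] [OpensMeasurableSpace X] {μ : Measure X} [IsProbabilityMeasure μ]
    {ε n : ℝ} (hBM : BMCond μ ε n) (hn : 1 ≤ n) {r : ℝ} (hr : r ∈ Set.Ioo 0 Real.pi)
    {A : Set X} (hA : MeasurableSet A) (hμA : 1 / 2 ≤ μ A)
    (hB : (Metric.thickening r A)ᶜ.Nonempty) :
    (2 : ℝ) ^ (-(1 / n)) + (μ (Metric.thickening r A)ᶜ).toReal ^ (1 / n)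
      ≤ 2 * Real.cos (r / 2) ^ ((n - 1) / n) := by
  have hc : 0 < Real.cos (r / 2) :=
    Real.cos_pos_of_mem_Ioo ⟨by linarith [Real.pi_pos, hr.1], by linarith [hr.2]⟩
  have hAne : A.Nonempty := nonempty_of_measure_ne_zero (μ := μ) fun h => by simp [h] at hμA
  have hBM' := hBM.half_mul_add_rpow_le_one_s9 (by linarith) hA
    Metric.isOpen_thickening.measurableSet.compl hAne hB (by positivity)
    fun x₀ h₀ x₁ h₁ => ofReal_inv_cos_half_rpow_le_distCoef_half hn hr.1
      (le_dist_of_mem_compl_thickening h₀ h₁)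
  have hμA' : (2 : ℝ) ^ (-(1 / n)) ≤ (μ A).toReal ^ (1 / n) := by
    rw [Real.rpow_neg zero_le_two, ← Real.inv_rpow zero_le_two]
    refine Real.rpow_le_rpow (by norm_num) ?_ (by positivity)
    simpa using ENNReal.toReal_mono (measure_ne_top μ A) hμA
  rw [Real.inv_rpow hc.le] at hBM'
  field_simp at hBM'
  linarith

lemma le_exp_of_rpow_one_div_le {b n s : ℝ} (hb : 0 ≤ b) (hn : 0 < n) (h : b ^ (1 / n) ≤ s) :
    b ≤ Real.exp (n * (s - 1)) := by
  rcases hb.eq_or_lt with rfl | hb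
  · exact (Real.exp_pos _).le
  have hlog : Real.log b ≤ n * (s - 1) := calc
    Real.log b = n * Real.log (b ^ (1 / n)) := by
      rw [Real.log_rpow hb]; field_simp
    _ ≤ n * (b ^ (1 / n) - 1) := by
      gcongr; exact Real.log_le_sub_one_of_pos (by positivity)
    _ ≤ n * (s - 1) := by gcongr
  rw [← Real.exp_log hb]
  exact Real.exp_le_exp.2 hlog

theorem refined_concentration_general (X : Type*) [MetricSpace X]
    [MeasurableSpace X] [BorelSpace X]
    (μ : Measure X) [IsProbabilityMeasure μ]
    (ε n : ℝ) (hn : 1 < n) (hBM : BMCond μ ε n) :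
    ∀ r ∈ Set.Ioo 0 Real.pi,
      concFn μ r ≤
        Real.exp (-n * (1 + (2 : ℝ) ^ (-(1 / n)) - 2 * Real.cos (r / 2) ^ ((n - 1) / n)))  := by
  intro r hr
  refine Real.sSup_le ?_ (Real.exp_pos _).le
  rintro v ⟨A, hA, hμA, rfl⟩
  have hT := (Metric.isOpen_thickening (δ := r) (E := A)).measurableSet
  rw [← measureReal_def, ← probReal_compl_eq_one_sub hT, measureReal_def]
  rcases (Metric.thickening r A)ᶜ.eq_empty_or_nonempty with hB | hB
  · simpa [hB] using (Real.exp_pos _).le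
  have hbound := hBM.rpow_measure_compl_thickening_le hn.le hr hA hμA hB
  convert le_exp_of_rpow_one_div_le ENNReal.toReal_nonneg (by linarith)
    (le_sub_iff_add_le'.2 hbound) using 2
  ring

theorem refined_concentration (X : Type*) [MetricSpace X] [CompleteSpace X]
    [TopologicalSpace.SeparableSpace X] [MeasurableSpace X] [BorelSpace X]
    (μ : Measure X) [IsProbabilityMeasure μ] [μ.IsOpenPosMeasure]
    (ε n : ℝ) (hε : 0 ≤ ε) (hn : 1 < n) (hBM : BMCond μ ε n) :
    ∀ r ∈ Set.Ioo 0 Real.pi,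
      concFn μ r ≤
        Real.exp (-n * (1 + (2 : ℝ) ^ (-(1 / n)) - 2 * Real.cos (r / 2) ^ ((n - 1) / n))) :=
  refined_concentration_general X μ ε n hn hBM
end
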